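/- Let φ be a spectrum, μ the associated measure on [0,1], and X an integrable nonnegative random variable. Then g_{φ,X} is a real-valued increasing convex function and the infimum in the representation ρ_φ(X) = inf_{g∈G}{E[g(X)] + ∫_0^1 g^*(φ(u))du} is attained at g_{φ,X}, i.e. ρ_φ(X) = E[g_{φ,X}(X)] + ∫_0^1 g_{φ,X}^*(φ(u))du. -/

import Mathlib

/-!
For `u ∈ (0,1)` let `θ_u(α) = (1-α)⁻¹ 1_{[0,u]}(α)`. Since `dμ = (1-α) dν`, we get
`∫ θ_u dμ = ν[0,u] = φ(u)`, and by monotonicity of `F_X⁻¹` the number `θ_u(α)` is a subgradient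
at `F_X⁻¹(u)` of the integrand `x ↦ F_X⁻¹(α) + (1-α)⁻¹ (x - F_X⁻¹(α))⁺`. Integrating in `α`,
`φ(u)` is a subgradient of `g = g_{φ,X}` at `F_X⁻¹(u)`, so the Fenchel–Young inequality
`F_X⁻¹(u) φ(u) ≤ g(F_X⁻¹(u)) + g^*(φ(u))` is an equality. Integrating it over `u ∈ (0,1)`, and
using that `F_X⁻¹` pushes the uniform law on `(0,1)` forward to the law of `X`, gives the
representation. All integrals are finite because `(1-α) F_X⁻¹(α) ≤ E[X]`.
-/

open MeasureTheory Set NNReal ENNReal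

/-- Quantile function `F_X⁻¹(u) = inf {x | u ≤ F_X(x)}`. -/
noncomputable def quantile {Ω : Type*} [MeasurableSpace Ω] (P : Measure Ω)
    (X : Ω → ℝ) (u : ℝ) : ℝ :=
  sInf {x : ℝ | u ≤ (P {ω | X ω ≤ x}).toReal}

/-- Spectral risk measure `ρ_φ(X) = ∫_0^1 F_X⁻¹(u) φ(u) du ∈ [0,∞]`. -/
noncomputable def specRisk {Ω : Type*} [MeasurableSpace Ω] (P : Measure Ω)
    (φ : ℝ → ℝ) (X : Ω → ℝ) : ℝ≥0∞ :=
  ∫⁻ u in Set.Ioo (0:ℝ) 1, ENNReal.ofReal (quantile P X u * φ u)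

/-- `φ` is a spectrum. -/
def IsSpectrum (φ : ℝ → ℝ) : Prop :=
  MonotoneOn φ (Set.Icc 0 1) ∧ (∀ u ∈ Set.Icc (0:ℝ) 1, 0 ≤ φ u) ∧
    (∀ t ∈ Set.Ico (0:ℝ) 1, ContinuousWithinAt φ (Set.Ici t) t) ∧
    (∫ u in Set.Ioo (0:ℝ) 1, φ u) = 1

/-- Convex conjugate `g^*(y) = sup_{s ∈ ℝ} (s y - g s)`, with values in `(-∞,∞]`. -/
noncomputable def conj (g : ℝ → ℝ) (y : ℝ) : EReal :=
  ⨆ s : ℝ, ((s * y - g s : ℝ) : EReal)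

/-- The nonnegative part of an extended real number, as an element of `[0,∞]`. -/
noncomputable def erealToENNReal (x : EReal) : ℝ≥0∞ :=
  if x = ⊤ then ⊤ else ENNReal.ofReal x.toReal

/-- Expectation `E[g(X)] ∈ (-∞,∞]` of `g(X)` when `g(X) ≥ b` pointwise. -/
noncomputable def expFrom {Ω : Type*} [MeasurableSpace Ω] (P : Measure Ω)
    (g : ℝ → ℝ) (X : Ω → ℝ) (b : ℝ) : EReal :=
  ((∫⁻ ω, ENNReal.ofReal (g (X ω) - b) ∂P : ℝ≥0∞) : EReal) + (b : EReal)

/-- `∫_0^1 g^*(φ(u)) du ∈ (-∞,∞]` written via the shift `g^*(φ(u)) + b ≥ 0`. -/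
noncomputable def intConj (φ : ℝ → ℝ) (g : ℝ → ℝ) (b : ℝ) : EReal :=
  ((∫⁻ u in Set.Ioo (0:ℝ) 1, erealToENNReal (conj g (φ u) + (b : EReal)) : ℝ≥0∞) : EReal)
    - (b : EReal)

/-- The integrand of `g_{φ,X}`:
`α ↦ F_X⁻¹(α) + (1-α)⁻¹ (x - F_X⁻¹(α))⁺`. -/
noncomputable def gphiIntegrand {Ω : Type*} [MeasurableSpace Ω] (P : Measure Ω)
    (X : Ω → ℝ) (x α : ℝ) : ℝ :=
  quantile P X α + (1 - α)⁻¹ * max (x - quantile P X α) 0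

/-- `g_{φ,X}(x) = ∫_{[0,1]} [F_X⁻¹(α) + (1-α)⁻¹ (x - F_X⁻¹(α))⁺] μ(dα)`. -/
noncomputable def gphi {Ω : Type*} [MeasurableSpace Ω] (P : Measure Ω)
    (μ : Measure ℝ) (X : Ω → ℝ) (x : ℝ) : ℝ :=
  ∫ α, gphiIntegrand P X x α ∂μ

open Filter Topology ProbabilityTheory

lemma StieltjesFunction.sInf_setOf_le_le_iff (f : StieltjesFunction ℝ) {u : ℝ}
    (hbot : ∀ᶠ x in atBot, f x < u) (htop : ∃ x, u ≤ f x) (a : ℝ) :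
    sInf {x | u ≤ f x} ≤ a ↔ u ≤ f a := by
  obtain ⟨b, hb⟩ := hbot.exists_forall_of_atBot
  have hbdd : BddBelow {x | u ≤ f x} :=
    ⟨b, fun x hx => le_of_not_ge fun hxb => (hx.trans_lt (hb x hxb)).false⟩
  refine ⟨fun ha => ?_, fun ha => csInf_le hbdd ha⟩
  refine le_trans ?_ (f.mono ha)
  have hright : ∀ᶠ x in 𝓝[>] sInf {x | u ≤ f x}, u ≤ f x :=
    eventually_nhdsWithin_of_forall fun x hx => by
      obtain ⟨y, hy, hyx⟩ := exists_lt_of_csInf_lt htop hx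
      exact le_trans hy (f.mono hyx.le)
  exact ge_of_tendsto ((f.right_continuous _).mono Ioi_subset_Ici_self) hright

section Quantile

variable {Ω : Type*} [MeasurableSpace Ω] (P : Measure Ω) {X : Ω → ℝ}

/-- Here the defining set is all of `ℝ`, and `sInf univ = 0` is Lean's junk value (the
mathematical infimum is `-∞`). -/
lemma quantile_of_nonpos {u : ℝ} (hu : u ≤ 0) : quantile P X u = 0 := by
  rw [quantile, show {x : ℝ | u ≤ (P {ω | X ω ≤ x}).toReal} = univ from
    eq_univ_of_forall fun x => hu.trans toReal_nonneg, Real.sInf_of_not_bddBelow not_bddBelow_univ]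

lemma quantile_nonneg (hX : ∀ ω, 0 ≤ X ω) (u : ℝ) : 0 ≤ quantile P X u := by
  rcases le_or_gt u 0 with hu | hu
  · exact (quantile_of_nonpos P hu).ge
  refine Real.sInf_nonneg fun x hx => le_of_not_gt fun hx0 => ?_
  have hempty : {ω | X ω ≤ x} = ∅ :=
    eq_empty_of_forall_notMem fun ω hω => (hX ω).not_gt (lt_of_le_of_lt hω hx0)
  have hx : u ≤ (P {ω | X ω ≤ x}).toReal := hx
  simp only [hempty, measure_empty, toReal_zero] at hx
  exact hx.not_gt hu

variable [IsProbabilityMeasure P]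

lemma quantile_le_iff (hXm : Measurable X) {u : ℝ} (hu : u ∈ Ioo 0 1) (a : ℝ) :
    quantile P X u ≤ a ↔ u ≤ (P {ω | X ω ≤ a}).toReal := by
  have := Measure.isProbabilityMeasure_map (μ := P) hXm.aemeasurable
  have hcdf : ∀ x, (P {ω | X ω ≤ x}).toReal = cdf (P.map X) x := fun x => by
    rw [cdf_eq_real, measureReal_def, Measure.map_apply hXm measurableSet_Iic]
    rfl
  simp only [quantile, hcdf]
  exact (cdf (P.map X)).sInf_setOf_le_le_iff ((tendsto_cdf_atBot _).eventually (gt_mem_nhds hu.1))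
    ((tendsto_cdf_atTop _).eventually (le_mem_nhds hu.2)).exists a

lemma quantile_monotoneOn (hXm : Measurable X) : MonotoneOn (quantile P X) (Ioo 0 1) :=
  fun _ hu _ hv huv =>
    (quantile_le_iff P hXm hu _).2 (huv.trans ((quantile_le_iff P hXm hv _).1 le_rfl))

lemma quantile_monotoneOn_Ico (hXm : Measurable X) (hX : ∀ ω, 0 ≤ X ω) :
    MonotoneOn (quantile P X) (Ico 0 1) := by
  intro u hu v hv huv
  rcases hu.1.eq_or_lt with rfl | hu0
  · exact (quantile_of_nonpos P le_rfl).trans_le (quantile_nonneg P hX v)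
  exact quantile_monotoneOn P hXm ⟨hu0, hu.2⟩ ⟨hu0.trans_le huv, hv.2⟩ huv

lemma aemeasurable_quantile (hXm : Measurable X) :
    AEMeasurable (quantile P X) (volume.restrict (Ioo 0 1)) :=
  aemeasurable_restrict_of_monotoneOn measurableSet_Ioo (quantile_monotoneOn P hXm)

lemma map_quantile_volume_Ioo (hXm : Measurable X) :
    (volume.restrict (Ioo 0 1)).map (quantile P X) = P.map X := by
  have hq := aemeasurable_quantile P hXm
  have : IsFiniteMeasure ((volume.restrict (Ioo (0:ℝ) 1)).map (quantile P X)) := by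
    constructor
    simp [Measure.map_apply_of_aemeasurable hq MeasurableSet.univ, Real.volume_Ioo]
  refine Measure.ext_of_Iic _ _ fun a => ?_
  set c := (P {ω | X ω ≤ a}).toReal
  have hpre : quantile P X ⁻¹' Iic a ∩ Ioo 0 1 = Ioo 0 1 ∩ Iic c := by
    ext u
    simp only [mem_inter_iff, mem_preimage, mem_Iic]
    exact ⟨fun h => ⟨h.2, (quantile_le_iff P hXm h.2 a).1 h.1⟩,
      fun h => ⟨(quantile_le_iff P hXm h.1 a).2 h.2, h.1⟩⟩
  have hc1 : c ≤ 1 := toReal_le_of_le_ofReal zero_le_one (by simpa using prob_le_one)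
  have hae : (Ioo 0 1 ∩ Iic c : Set ℝ) =ᵐ[volume] (Ioc 0 1 ∩ Iic c : Set ℝ) :=
    Ioo_ae_eq_Ioc.inter (ae_eq_refl _)
  rw [Measure.map_apply_of_aemeasurable hq measurableSet_Iic,
    Measure.restrict_apply' measurableSet_Ioo, hpre, Measure.map_apply hXm measurableSet_Iic,
    measure_congr hae, Ioc_inter_Iic, min_eq_right hc1,
    Real.volume_Ioc, sub_zero, ofReal_toReal (measure_ne_top _ _)]
  rfl

lemma lintegral_comp_quantile (hXm : Measurable X) {f : ℝ → ℝ≥0∞} (hf : Measurable f) :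
    ∫⁻ u in Ioo 0 1, f (quantile P X u) = ∫⁻ ω, f (X ω) ∂P := by
  rw [← lintegral_map' hf.aemeasurable (aemeasurable_quantile P hXm), map_quantile_volume_Ioo P hXm,
    lintegral_map hf hXm]

end Quantile

lemma ofReal_one_sub_mul_le_setLIntegral_Ioo {f : ℝ → ℝ} (hf : MonotoneOn f (Ico 0 1)) {α : ℝ}
    (hα : α ∈ Ico 0 1) :
    ENNReal.ofReal (1 - α) * ENNReal.ofReal (f α) ≤ ∫⁻ u in Ioo 0 1, ENNReal.ofReal (f u) :=
  calc ENNReal.ofReal (1 - α) * ENNReal.ofReal (f α)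
      = ∫⁻ _ in Ioo α 1, ENNReal.ofReal (f α) := by
        rw [setLIntegral_const, Real.volume_Ioo, mul_comm]
    _ ≤ ∫⁻ u in Ioo α 1, ENNReal.ofReal (f u) :=
        setLIntegral_mono' measurableSet_Ioo fun u hu =>
          ofReal_le_ofReal (hf hα ⟨hα.1.trans hu.1.le, hu.2⟩ hu.1.le)
    _ ≤ ∫⁻ u in Ioo 0 1, ENNReal.ofReal (f u) :=
        lintegral_mono_set (Ioo_subset_Ioo_left hα.1)

section OneSubDensity

variable {ν : Measure ℝ}

lemma ae_mem_Ico_withDensity_one_sub (hν : ∀ᵐ α ∂ν, 0 ≤ α) :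
    ∀ᵐ α ∂ν.withDensity (fun α => ENNReal.ofReal (1 - α)), α ∈ Ico 0 1 := by
  rw [ae_withDensity_iff (by fun_prop)]
  filter_upwards [hν] with α hα hα1
  exact ⟨hα, by simpa [ENNReal.ofReal_eq_zero] using hα1⟩

lemma integrable_inv_one_sub_withDensity [IsFiniteMeasure ν] :
    Integrable (fun α => (1 - α)⁻¹) (ν.withDensity fun α => ENNReal.ofReal (1 - α)) := by
  rw [integrable_withDensity_iff_integrable_smul' (by fun_prop)
    (ae_of_all _ fun _ => ofReal_lt_top)]
  refine (integrable_const (1 : ℝ)).mono' (by fun_prop) (ae_of_all _ fun α => ?_)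
  rcases lt_or_ge α 1 with hα | hα
  · rw [ENNReal.toReal_ofReal (by linarith), smul_eq_mul, mul_inv_cancel₀ (by linarith)]
    simp
  · simp [ENNReal.ofReal_eq_zero.2 (by linarith : 1 - α ≤ 0)]

lemma integral_indicator_inv_one_sub_withDensity {u : ℝ} (hu : u < 1) :
    ∫ α, (Icc 0 u).indicator (fun α => (1 - α)⁻¹) α
      ∂ν.withDensity (fun α => ENNReal.ofReal (1 - α)) = ν.real (Icc 0 u) := by
  rw [integral_withDensity_eq_integral_toReal_smul (by fun_prop)
    (ae_of_all _ fun _ => ofReal_lt_top), ← integral_indicator_one measurableSet_Icc]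
  congr 1 with α
  by_cases hα : α ∈ Icc 0 u
  · have : 0 < 1 - α := by linarith [hα.2]
    simp [hα, ENNReal.toReal_ofReal this.le, mul_inv_cancel₀ this.ne']
  · simp [hα]

lemma integrable_withDensity_one_sub_of_monotoneOn [IsFiniteMeasure ν] (hν : ∀ᵐ α ∂ν, 0 ≤ α)
    {f : ℝ → ℝ} (hf : MonotoneOn f (Ico 0 1)) (hf0 : 0 ≤ f 0)
    (hfi : ∫⁻ u in Ioo 0 1, ENNReal.ofReal (f u) < ∞) :
    Integrable f (ν.withDensity fun α => ENNReal.ofReal (1 - α)) := by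
  have hIco := ae_mem_Ico_withDensity_one_sub hν
  have hfm : AEMeasurable f (ν.withDensity fun α => ENNReal.ofReal (1 - α)) := by
    rw [← Measure.restrict_eq_self_of_ae_mem hIco]
    exact aemeasurable_restrict_of_monotoneOn measurableSet_Ico hf
  refine ⟨hfm.aestronglyMeasurable, ?_⟩
  have hf_nonneg : 0 ≤ᵐ[ν.withDensity fun α => ENNReal.ofReal (1 - α)] f :=
    hIco.mono fun α hα => hf0.trans (hf ⟨le_rfl, zero_lt_one⟩ hα hα.1)
  rw [hasFiniteIntegral_iff_ofReal hf_nonneg,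
    lintegral_withDensity_eq_lintegral_mul₀' (by fun_prop) hfm.ennreal_ofReal]
  calc ∫⁻ α, ENNReal.ofReal (1 - α) * ENNReal.ofReal (f α) ∂ν
      ≤ ∫⁻ _, (∫⁻ u in Ioo 0 1, ENNReal.ofReal (f u)) ∂ν := by
        refine lintegral_mono_ae (hν.mono fun α hα => ?_)
        rcases lt_or_ge α 1 with hα1 | hα1
        · exact ofReal_one_sub_mul_le_setLIntegral_Ioo hf ⟨hα, hα1⟩
        · simp [ENNReal.ofReal_eq_zero.2 (by linarith : 1 - α ≤ 0)]
    _ < ∞ := by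
        rw [lintegral_const]
        exact mul_lt_top hfi (measure_lt_top _ _)

end OneSubDensity

section ParametricIntegral

variable {S : Type*} [MeasurableSpace S] {μ : Measure S}

lemma monotone_integral_of_ae_monotone {β : Type*} [Preorder β] {f : β → S → ℝ}
    (hf : ∀ x, Integrable (f x) μ) (h : ∀ᵐ a ∂μ, Monotone fun x => f x a) :
    Monotone fun x => ∫ a, f x a ∂μ :=
  fun x y hxy => integral_mono_ae (hf x) (hf y) (h.mono fun _ ha => ha hxy)

lemma convexOn_integral_of_ae_convexOn {E : Type*} [AddCommMonoid E] [Module ℝ E] {s : Set E}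
    (hs : Convex ℝ s) {f : E → S → ℝ} (hf : ∀ x ∈ s, Integrable (f x) μ)
    (h : ∀ᵐ a ∂μ, ConvexOn ℝ s fun x => f x a) : ConvexOn ℝ s fun x => ∫ a, f x a ∂μ := by
  refine ⟨hs, fun x hx y hy a b ha hb hab => ?_⟩
  have hfx := (hf x hx).const_mul a
  have hfy := (hf y hy).const_mul b
  calc ∫ ω, f (a • x + b • y) ω ∂μ ≤ ∫ ω, (a * f x ω + b * f y ω) ∂μ :=
        integral_mono_ae (hf _ (hs hx hy ha hb hab)) (hfx.add hfy)
          (h.mono fun _ hω => hω.2 hx hy ha hb hab)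
    _ = a • ∫ ω, f x ω ∂μ + b • ∫ ω, f y ω ∂μ := by
        rw [integral_add hfx hfy, integral_const_mul, integral_const_mul, smul_eq_mul, smul_eq_mul]

end ParametricIntegral

lemma conj_eq_of_forall_mul_sub_le {g : ℝ → ℝ} {y t : ℝ} (h : ∀ s, y * (s - t) ≤ g s - g t) :
    conj g y = ((t * y - g t : ℝ) : EReal) :=
  le_antisymm (iSup_le fun s => EReal.coe_le_coe_iff.2 (by linarith [h s, mul_sub y s t]))
    (le_iSup (fun s => ((s * y - g s : ℝ) : EReal)) t)

lemma EReal.coe_ennreal_add_eq_add_add_sub (A B : ℝ≥0∞) (b : ℝ) :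
    ((A + B : ℝ≥0∞) : EReal) = (A + b) + (B - b) := by
  rw [EReal.coe_ennreal_add, sub_eq_add_neg, add_add_add_comm, ← EReal.coe_neg, ← EReal.coe_add,
    add_neg_cancel, EReal.coe_zero, add_zero]

section GPhi

variable {Ω : Type*} [MeasurableSpace Ω] (P : Measure Ω) {X : Ω → ℝ}

lemma monotone_gphiIntegrand {α : ℝ} (hα : α < 1) : Monotone fun x => gphiIntegrand P X x α :=
  fun _ _ hxy => add_le_add_right (mul_le_mul_of_nonneg_left
    (max_le_max (sub_le_sub_right hxy _) le_rfl) (inv_nonneg.2 (sub_nonneg.2 hα.le))) _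

lemma convexOn_gphiIntegrand {α : ℝ} (hα : α < 1) :
    ConvexOn ℝ univ fun x => gphiIntegrand P X x α := by
  have hk : 0 ≤ (1 - α)⁻¹ := inv_nonneg.2 (sub_nonneg.2 hα.le)
  exact (convexOn_const _ convex_univ).add ((((convexOn_id convex_univ).sub
    (concaveOn_const _ convex_univ)).sup (convexOn_const 0 convex_univ)).smul hk)

lemma integrable_gphiIntegrand {μ : Measure ℝ} (hX : ∀ ω, 0 ≤ X ω) (hμ : ∀ᵐ α ∂μ, α < 1)
    (hq : Integrable (quantile P X) μ) (hinv : Integrable (fun α => (1 - α)⁻¹) μ) (x : ℝ) :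
    Integrable (gphiIntegrand P X x) μ := by
  refine hq.add ((hinv.mul_const (max x 0)).mono' (hinv.aemeasurable.mul
    ((aemeasurable_const.sub hq.aemeasurable).max aemeasurable_const)).aestronglyMeasurable
    (hμ.mono fun α hα => ?_))
  have hk : 0 ≤ (1 - α)⁻¹ := inv_nonneg.2 (sub_nonneg.2 hα.le)
  rw [Real.norm_of_nonneg (mul_nonneg hk (le_max_right _ _))]
  exact mul_le_mul_of_nonneg_left (max_le_max (by linarith [quantile_nonneg P hX α]) le_rfl) hk

lemma indicator_mul_sub_le_gphiIntegrand_sub (hq : MonotoneOn (quantile P X) (Ico 0 1))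
    {u α : ℝ} (hu : u ∈ Ioo 0 1) (hα : α ∈ Ico 0 1) (s : ℝ) :
    (Icc 0 u).indicator (fun α => (1 - α)⁻¹) α * (s - quantile P X u)
      ≤ gphiIntegrand P X s α - gphiIntegrand P X (quantile P X u) α := by
  have hk : 0 ≤ (1 - α)⁻¹ := inv_nonneg.2 (sub_nonneg.2 hα.2.le)
  have hu' : u ∈ Ico 0 1 := ⟨hu.1.le, hu.2⟩
  have hdiff : gphiIntegrand P X s α - gphiIntegrand P X (quantile P X u) α = (1 - α)⁻¹ *
      (max (s - quantile P X α) 0 - max (quantile P X u - quantile P X α) 0) := by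
    unfold gphiIntegrand; ring
  rw [hdiff]
  by_cases hαu : α ≤ u
  · rw [indicator_of_mem (show α ∈ Icc 0 u from ⟨hα.1, hαu⟩),
      max_eq_left (sub_nonneg.2 (hq hα hu' hαu))]
    exact mul_le_mul_of_nonneg_left (by linarith [le_max_left (s - quantile P X α) 0]) hk
  · rw [indicator_of_notMem (fun h => hαu h.2), zero_mul,
      max_eq_right (sub_nonpos.2 (hq hu' hα (le_of_not_ge hαu))), sub_zero]
    exact mul_nonneg hk (le_max_right _ _)

lemma integral_indicator_mul_sub_le_gphi_sub {μ : Measure ℝ}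
    (hq : MonotoneOn (quantile P X) (Ico 0 1)) (hμ : ∀ᵐ α ∂μ, α ∈ Ico 0 1)
    (hinv : Integrable (fun α => (1 - α)⁻¹) μ) (hint : ∀ x, Integrable (gphiIntegrand P X x) μ)
    {u : ℝ} (hu : u ∈ Ioo 0 1) (s : ℝ) :
    (∫ α, (Icc 0 u).indicator (fun α => (1 - α)⁻¹) α ∂μ) * (s - quantile P X u)
      ≤ gphi P μ X s - gphi P μ X (quantile P X u) := by
  rw [← integral_mul_const, gphi, gphi, ← integral_sub (hint s) (hint _)]
  exact integral_mono_ae ((hinv.indicator measurableSet_Icc).mul_const _)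
    ((hint s).sub (hint _))
    (hμ.mono fun α hα => indicator_mul_sub_le_gphiIntegrand_sub P hq hu hα s)

end GPhi

lemma specRisk_eq_of_subgradient {Ω : Type*} [MeasurableSpace Ω] (P : Measure Ω)
    [IsProbabilityMeasure P] {X : Ω → ℝ} (hXm : Measurable X) (hX : ∀ ω, 0 ≤ X ω)
    {φ g : ℝ → ℝ} (hg : Monotone g)
    (hsub : ∀ u ∈ Ioo 0 1, ∀ s, φ u * (s - quantile P X u) ≤ g s - g (quantile P X u)) :
    ((specRisk P φ X : ℝ≥0∞) : EReal) = expFrom P g X (g 0) + intConj φ g (g 0) := by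
  have hconj : ∀ u ∈ Ioo (0:ℝ) 1, erealToENNReal (conj g (φ u) + (g 0 : EReal))
      = ENNReal.ofReal (quantile P X u * φ u - g (quantile P X u) + g 0) := fun u hu => by
    rw [conj_eq_of_forall_mul_sub_le (hsub u hu), ← EReal.coe_add, erealToENNReal,
      if_neg (EReal.coe_ne_top _), EReal.toReal_coe]
  have hsplit : specRisk P φ X = ∫⁻ ω, ENNReal.ofReal (g (X ω) - g 0) ∂P
      + ∫⁻ u in Ioo 0 1, erealToENNReal (conj g (φ u) + (g 0 : EReal)) := by
    rw [← lintegral_comp_quantile P hXm (hg.measurable.sub_const _).ennreal_ofReal,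
      setLIntegral_congr_fun measurableSet_Ioo hconj,
      ← lintegral_add_left' (f := fun u => ENNReal.ofReal (g (quantile P X u) - g 0))
        ((hg.measurable.comp_aemeasurable (aemeasurable_quantile P hXm)).sub_const _
          ).ennreal_ofReal]
    refine setLIntegral_congr_fun measurableSet_Ioo fun u hu => ?_
    rw [← ofReal_add (sub_nonneg.2 (hg (quantile_nonneg P hX u)))
      (by linarith [hsub u hu 0, mul_sub (φ u) 0 (quantile P X u)])]
    ring_nf
  rw [expFrom, intConj, hsplit, EReal.coe_ennreal_add_eq_add_add_sub]

/-- For a spectrum `φ` with associated measure `μ` and an integrable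
nonnegative random variable `X`, `g_{φ,X}` is a real-valued increasing convex function
and the infimum in the spectral representation is attained at it:
`ρ_φ(X) = E[g_{φ,X}(X)] + ∫_0^1 g_{φ,X}^*(φ(u)) du`. -/
theorem spectral_inf_attained {Ω : Type*} [MeasurableSpace Ω] (P : Measure Ω)
    [IsProbabilityMeasure P] (φ : ℝ → ℝ) (hφ : IsSpectrum φ)
    (ν : Measure ℝ) (hν : ∀ t ∈ Set.Icc (0:ℝ) 1, ν (Set.Icc 0 t) = ENNReal.ofReal (φ t))
    (hνsupp : ν (Set.Icc (0:ℝ) 1)ᶜ = 0)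
    (μ : Measure ℝ) (hμ : μ = ν.withDensity (fun α => ENNReal.ofReal (1 - α)))
    (X : Ω → ℝ) (hXm : Measurable X) (hX : ∀ ω, 0 ≤ X ω) (hXi : Integrable X P) :
    (∀ x : ℝ, Integrable (gphiIntegrand P X x) μ) ∧
      Monotone (gphi P μ X) ∧ ConvexOn ℝ Set.univ (gphi P μ X) ∧
      ((specRisk P φ X : ℝ≥0∞) : EReal)
        = expFrom P (gphi P μ X) X (gphi P μ X 0)
            + intConj φ (gphi P μ X) (gphi P μ X 0) := by
  obtain ⟨-, hφ_nonneg, -, -⟩ := hφ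
  have : IsFiniteMeasure ν := ⟨by
    rw [← measure_add_measure_compl measurableSet_Icc, hνsupp, hν 1 ⟨zero_le_one, le_rfl⟩, add_zero]
    exact ofReal_lt_top⟩
  have hν0 : ∀ᵐ α ∂ν, 0 ≤ α :=
    measure_mono_null (fun α (hα : ¬0 ≤ α) (hα1 : α ∈ Icc 0 1) => hα hα1.1) hνsupp
  subst hμ
  have hμ := ae_mem_Ico_withDensity_one_sub hν0
  have hqmono := quantile_monotoneOn_Ico P hXm hX
  have hq := integrable_withDensity_one_sub_of_monotoneOn hν0 hqmono (quantile_nonneg P hX 0)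
    ((lintegral_comp_quantile P hXm measurable_ofReal).trans_lt hXi.lintegral_lt_top)
  have hint := integrable_gphiIntegrand P hX (hμ.mono fun _ hα => hα.2) hq
    integrable_inv_one_sub_withDensity
  have hmono := monotone_integral_of_ae_monotone hint (hμ.mono fun _ hα =>
    monotone_gphiIntegrand P hα.2)
  refine ⟨hint, hmono, convexOn_integral_of_ae_convexOn convex_univ (fun x _ => hint x)
    (hμ.mono fun _ hα => convexOn_gphiIntegrand P hα.2), ?_⟩
  refine specRisk_eq_of_subgradient P hXm hX hmono fun u hu s => ?_
  have hφu : φ u = ∫ α, (Icc 0 u).indicator (fun α => (1 - α)⁻¹) α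
      ∂ν.withDensity (fun α => ENNReal.ofReal (1 - α)) := by
    rw [integral_indicator_inv_one_sub_withDensity hu.2, measureReal_def, hν u ⟨hu.1.le, hu.2.le⟩,
      toReal_ofReal (hφ_nonneg u ⟨hu.1.le, hu.2.le⟩)]
  rw [hφu]
  exact integral_indicator_mul_sub_le_gphi_sub P hqmono hμ integrable_inv_one_sub_withDensity
    hint hu s
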